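/- Let n ≥ 2, λ > -n/2, μ a finite positive Borel measure on S^{n-1}, and u the P_λ-Poisson integral of μ. Then for every unit vector ζ, lim_{r→1⁻} (1-r)^(n-1) u(rζ) = 2^(1+2λ) μ({ζ}). -/

import Mathlib

/-!
Since `1 - r² = (1 - r)(1 + r)` and `(n - 1) = (n + 2λ) - (1 + 2λ)`, for `0 < r < 1`
`(1 - r)^(n-1) u(rζ) = (1 + r)^(1+2λ) ∫ ((1 - r) / |rζ - ξ|)^(n+2λ) dμ(ξ)`.
The ratio `(1 - r) / |rζ - ξ|` lies in `[0, 1]`, equals `1` at `ξ = ζ` and tends to `0` as `r → 1`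
for every other `ξ`; as `n + 2λ > 0`, dominated convergence sends the integral to `μ({ζ})`.
-/

open MeasureTheory Filter Topology Set

lemma rpow_sub_mul_mul_rpow_div {s t d a b : ℝ} (hs : 0 < s) (ht : 0 ≤ t) (hd : 0 ≤ d) :
    s ^ (a - b) * ((s * t) ^ b / d ^ a) = t ^ b * (s / d) ^ a := by
  have hsb : s ^ b ≠ 0 := (Real.rpow_pos_of_pos hs b).ne'
  rw [Real.mul_rpow hs.le ht, Real.div_rpow hs.le hd, Real.rpow_sub hs]
  field_simp

section UnitSphere

variable {E : Type*} [NormedAddCommGroup E] [NormedSpace ℝ E] {ζ ξ : E} {r : ℝ}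

lemma one_sub_le_norm_smul_sub (hζ : ‖ζ‖ = 1) (hξ : ‖ξ‖ = 1) (hr : 0 ≤ r) :
    1 - r ≤ ‖r • ζ - ξ‖ := by
  have h := norm_sub_norm_le ξ (r • ζ)
  rwa [norm_sub_rev ξ, norm_smul, hζ, hξ, Real.norm_of_nonneg hr, mul_one] at h

lemma div_norm_smul_sub_le_one (hζ : ‖ζ‖ = 1) (hξ : ‖ξ‖ = 1) (hr : 0 ≤ r) :
    (1 - r) / ‖r • ζ - ξ‖ ≤ 1 :=
  div_le_one_of_le₀ (one_sub_le_norm_smul_sub hζ hξ hr) (norm_nonneg _)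

lemma div_norm_smul_sub_self (hζ : ‖ζ‖ = 1) (hr : r < 1) : (1 - r) / ‖r • ζ - ζ‖ = 1 := by
  have hnorm : ‖r • ζ - ζ‖ = 1 - r := by
    rw [show r • ζ - ζ = (r - 1) • ζ by rw [sub_smul, one_smul], norm_smul, hζ, mul_one, Real.norm_of_nonpos (by linarith)]
    ring
  rw [hnorm, div_self (by linarith)]

lemma tendsto_div_norm_smul_sub (hne : ζ ≠ ξ) :
    Tendsto (fun r : ℝ => (1 - r) / ‖r • ζ - ξ‖) (𝓝 1) (𝓝 0) := by
  have h : ContinuousAt (fun r : ℝ => (1 - r) / ‖r • ζ - ξ‖) 1 := by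
    fun_prop (disch := simpa [sub_eq_zero] using hne)
  simpa using h.tendsto

theorem tendsto_integral_div_norm_smul_sub_rpow [MeasurableSpace E] [BorelSpace E]
    (μ : Measure (Metric.sphere (0 : E) 1)) [IsFiniteMeasure μ] (ζ : Metric.sphere (0 : E) 1)
    {a : ℝ} (ha : 0 < a) :
    Tendsto (fun r : ℝ => ∫ ξ, ((1 - r) / ‖r • (ζ : E) - ξ‖) ^ a ∂μ) (𝓝[<] 1)
      (𝓝 (μ.real {ζ})) := by
  have hr : ∀ᶠ r in 𝓝[<] (1 : ℝ), r ∈ Ioo 0 1 := Ioo_mem_nhdsLT one_pos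
  rw [← integral_indicator_one (measurableSet_singleton ζ)]
  refine tendsto_integral_filter_of_dominated_convergence (fun _ => 1)
    (Eventually.of_forall fun r => ?_) ?_ (integrable_const 1) (Eventually.of_forall fun ξ => ?_)
  · exact Measurable.aestronglyMeasurable (by fun_prop)
  · filter_upwards [hr] with r hr
    refine Eventually.of_forall fun ξ => ?_
    have hq := div_nonneg (sub_nonneg.2 hr.2.le) (norm_nonneg (r • (ζ : E) - ξ))
    rw [Real.norm_of_nonneg (Real.rpow_nonneg hq a)]
    exact Real.rpow_le_one hq (div_norm_smul_sub_le_one (norm_eq_of_mem_sphere ζ)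
      (norm_eq_of_mem_sphere ξ) hr.1.le) ha.le
  · by_cases hξ : ξ = ζ
    · subst hξ
      rw [indicator_of_mem (mem_singleton ξ), Pi.one_apply]
      refine tendsto_const_nhds.congr' ?_
      filter_upwards [self_mem_nhdsWithin] with r hr
      rw [div_norm_smul_sub_self (norm_eq_of_mem_sphere ξ) hr, Real.one_rpow]
    · rw [indicator_of_notMem (mem_singleton_iff.not.2 hξ), ← Real.zero_rpow ha.ne']
      have hne : (ζ : E) ≠ ξ := fun h => hξ (Subtype.ext h).symm
      exact ((tendsto_div_norm_smul_sub hne).rpow_const (Or.inr ha.le)).mono_left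
        nhdsWithin_le_nhds

end UnitSphere

theorem stmt11_general (n : ℕ) (l : ℝ) (hl : -(n / 2 : ℝ) < l)
    (μ : MeasureTheory.Measure (Metric.sphere (0 : EuclideanSpace ℝ (Fin n)) 1))
    [MeasureTheory.IsFiniteMeasure μ]
    (u : EuclideanSpace ℝ (Fin n) → ℝ)
    (hu : ∀ x, ‖x‖ < 1 →
      u x = ∫ ξ, (1 - ‖x‖ ^ 2) ^ (1 + 2 * l) / ‖x - (ξ : EuclideanSpace ℝ (Fin n))‖ ^ ((n : ℝ) + 2 * l) ∂μ)
    (ζ : Metric.sphere (0 : EuclideanSpace ℝ (Fin n)) 1) :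
    Filter.Tendsto (fun r : ℝ => (1 - r) ^ ((n : ℝ) - 1) * u (r • (ζ : EuclideanSpace ℝ (Fin n))))
      (nhdsWithin 1 (Set.Iio 1))
      (nhds ((2 : ℝ) ^ (1 + 2 * l) * (μ {ζ}).toReal)) := by
  have ha : 0 < (n : ℝ) + 2 * l := by linarith
  have hone_add : Tendsto (fun r : ℝ => (1 + r) ^ (1 + 2 * l)) (𝓝[<] 1) (𝓝 (2 ^ (1 + 2 * l))) := by
    have h : Tendsto (fun r : ℝ => (1 + r) ^ (1 + 2 * l)) (𝓝 1) (𝓝 ((1 + 1) ^ (1 + 2 * l))) :=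
      (tendsto_const_nhds.add tendsto_id).rpow_const (Or.inl (by norm_num))
    rw [one_add_one_eq_two] at h
    exact h.mono_left nhdsWithin_le_nhds
  refine (hone_add.mul (tendsto_integral_div_norm_smul_sub_rpow μ ζ ha)).congr' ?_
  filter_upwards [Ioo_mem_nhdsLT one_pos] with r hr
  have hnorm : ‖r • (ζ : EuclideanSpace ℝ (Fin n))‖ = r := by
    rw [norm_smul, norm_eq_of_mem_sphere ζ, mul_one, Real.norm_of_nonneg hr.1.le]
  rw [hu _ (hnorm.trans_lt hr.2), hnorm, ← integral_const_mul, ← integral_const_mul]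
  congr 1 with ξ
  rw [show (n : ℝ) - 1 = ((n : ℝ) + 2 * l) - (1 + 2 * l) by ring,
    show 1 - r ^ 2 = (1 - r) * (1 + r) by ring,
    rpow_sub_mul_mul_rpow_div (by linarith [hr.2]) (by linarith [hr.1]) (norm_nonneg _)]

theorem stmt11 (n : ℕ) (hn : 2 ≤ n) (l : ℝ) (hl : -(n / 2 : ℝ) < l)
    (μ : MeasureTheory.Measure (Metric.sphere (0 : EuclideanSpace ℝ (Fin n)) 1))
    [MeasureTheory.IsFiniteMeasure μ]
    (u : EuclideanSpace ℝ (Fin n) → ℝ)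
    (hu : ∀ x, ‖x‖ < 1 →
      u x = ∫ ξ, (1 - ‖x‖ ^ 2) ^ (1 + 2 * l) / ‖x - (ξ : EuclideanSpace ℝ (Fin n))‖ ^ ((n : ℝ) + 2 * l) ∂μ)
    (ζ : Metric.sphere (0 : EuclideanSpace ℝ (Fin n)) 1) :
    Filter.Tendsto (fun r : ℝ => (1 - r) ^ ((n : ℝ) - 1) * u (r • (ζ : EuclideanSpace ℝ (Fin n))))
      (nhdsWithin 1 (Set.Iio 1))
      (nhds ((2 : ℝ) ^ (1 + 2 * l) * (μ {ζ}).toReal)) :=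
  stmt11_general n l hl μ u hu ζ
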